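/- Let C > 0, χ ∈ (0,2], and let (Z_m) and Z be real random variables on a probability space (Ω, ℙ) such that Z_m converges to Z in probability, the characteristic function of Z_m is t ↦ exp(−C K_m |t|^χ) for nonnegative reals K_m, and K_m → K as m → ∞. Then for all 0 < ε′ < ε, ℙ(|Z| > ε) ≤ 2^{χ+1} C K / ((χ+1) (ε′)^χ). -/

import Mathlib

/-!
By the truncation inequality `P(|X| > r) ≤ (r/2) ∫_{-2/r}^{2/r} (1 - φ_X(t)) dt` and
`1 - exp(-x) ≤ x`, a variable with characteristic function `exp(-c|t|^χ)` satisfies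
`P(|X| > r) ≤ (r/2) ∫_{-2/r}^{2/r} c|t|^χ dt = 2^{χ+1} c / ((χ+1) r^χ)`.
Applied to `Z_m` at level `ε'`, this bound passes to `Z` at any level `ε > ε'`, since
`{|Z| > ε} ⊆ {|Z_m| > ε'} ∪ {|Z_m - Z| > ε - ε'}` and the last event has vanishing probability.
-/

open MeasureTheory ProbabilityTheory Filter Topology

/-- The characteristic function of a real random variable `Z` on `(Ω, P)`:
`φ_Z(t) = E[exp(i t Z)]`. -/
noncomputable def charFn {Ω : Type*} [MeasurableSpace Ω] (P : Measure Ω) (Z : Ω → ℝ) (t : ℝ) : ℂ :=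
  ∫ ω, Complex.exp (t * Z ω * Complex.I) ∂P

lemma charFn_eq_charFun_map {Ω : Type*} [MeasurableSpace Ω] (P : Measure Ω) {X : Ω → ℝ}
    (hX : Measurable X) : charFn P X = charFun (P.map X) := by
  ext t
  rw [charFun_apply_real, integral_map hX.aemeasurable (by fun_prop), charFn]

lemma integral_abs_rpow_neg_self {χ u : ℝ} (hχ : 0 ≤ χ) (hu : 0 ≤ u) :
    ∫ t in (-u)..u, |t| ^ χ = 2 * u ^ (χ + 1) / (χ + 1) := by
  have hcont : Continuous fun t : ℝ => |t| ^ χ := continuous_abs.rpow_const fun _ => Or.inr hχ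
  have hright : ∫ t in (0 : ℝ)..u, |t| ^ χ = u ^ (χ + 1) / (χ + 1) := by
    rw [intervalIntegral.integral_congr (g := fun t => t ^ χ), integral_rpow (Or.inl (by linarith)),
      Real.zero_rpow (by positivity), sub_zero]
    intro t ht
    rw [Set.uIcc_of_le hu] at ht
    simp [abs_of_nonneg ht.1]
  have hleft : ∫ t in (-u)..(0 : ℝ), |t| ^ χ = u ^ (χ + 1) / (χ + 1) := by
    simpa only [abs_neg, neg_zero, hright] using
      (intervalIntegral.integral_comp_neg (a := (0 : ℝ)) (b := u) (fun t => |t| ^ χ)).symm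
  rw [← intervalIntegral.integral_add_adjacent_intervals (b := (0 : ℝ))
    (hcont.intervalIntegrable _ _) (hcont.intervalIntegrable _ _), hleft, hright]
  ring

lemma measureReal_abs_gt_le_of_charFun_eq_exp {μ : Measure ℝ} [IsProbabilityMeasure μ]
    {c χ r : ℝ} (hc : 0 ≤ c) (hχ : 0 ≤ χ) (hr : 0 < r)
    (hμ : ∀ t, charFun μ t = Real.exp (-(c * |t| ^ χ))) :
    μ.real {x | r < |x|} ≤ 2 ^ (χ + 1) * c / ((χ + 1) * r ^ χ) := by
  set u := 2 * r⁻¹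
  have hu : 0 ≤ u := by positivity
  have hintegrand : ∀ t, ‖1 - charFun μ t‖ ≤ c * |t| ^ χ := fun t => by
    have hx : 0 ≤ c * |t| ^ χ := by positivity
    rw [hμ, ← Complex.ofReal_one, ← Complex.ofReal_sub, Complex.norm_real, Real.norm_eq_abs,
      abs_of_nonneg (sub_nonneg.2 (Real.exp_le_one_iff.2 (neg_nonpos.2 hx)))]
    linarith [Real.add_one_le_exp (-(c * |t| ^ χ))]
  have hintegral : ‖∫ t in (-u)..u, 1 - charFun μ t‖ ≤ c * (2 * u ^ (χ + 1) / (χ + 1)) := by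
    rw [← integral_abs_rpow_neg_self hχ hu, ← intervalIntegral.integral_const_mul]
    exact intervalIntegral.norm_integral_le_of_norm_le (by linarith)
      (ae_of_all _ fun t _ => hintegrand t)
      ((continuous_const.mul (continuous_abs.rpow_const fun _ => Or.inr hχ)).intervalIntegrable _ _)
  calc μ.real {x | r < |x|}
      ≤ 2⁻¹ * r * ‖∫ t in (-u)..u, 1 - charFun μ t‖ := by
        simpa only [neg_mul] using measureReal_abs_gt_le_integral_charFun hr
    _ ≤ 2⁻¹ * r * (c * (2 * u ^ (χ + 1) / (χ + 1))) := by gcongr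
    _ = 2 ^ (χ + 1) * c / ((χ + 1) * r ^ χ) := by
        rw [Real.mul_rpow (by norm_num) (by positivity), Real.inv_rpow hr.le,
          Real.rpow_add_one hr.ne']
        field_simp

lemma measure_abs_gt_le_of_charFn_eq_exp {Ω : Type*} [MeasurableSpace Ω] {P : Measure Ω}
    [IsProbabilityMeasure P] {X : Ω → ℝ} (hX : Measurable X) {c χ r : ℝ} (hc : 0 ≤ c)
    (hχ : 0 ≤ χ) (hr : 0 < r) (hφ : ∀ t, charFn P X t = Real.exp (-(c * |t| ^ χ))) :
    P {ω | r < |X ω|} ≤ ENNReal.ofReal (2 ^ (χ + 1) * c / ((χ + 1) * r ^ χ)) := by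
  have : IsProbabilityMeasure (P.map X) := Measure.isProbabilityMeasure_map hX.aemeasurable
  have hset : MeasurableSet {x : ℝ | r < |x|} := measurableSet_lt measurable_const measurable_abs
  rw [← Set.preimage_ofPred_eq (p := fun x => r < |x|), ← Measure.map_apply hX hset,
    ← ofReal_measureReal]
  exact ENNReal.ofReal_le_ofReal <| measureReal_abs_gt_le_of_charFun_eq_exp hc hχ hr
    (charFn_eq_charFun_map P hX ▸ hφ)

lemma setOf_lt_abs_subset_union {Ω : Type*} (Z Y : Ω → ℝ) (ε' ε : ℝ) :
    {ω | ε < |Z ω|} ⊆ {ω | ε' < |Y ω|} ∪ {ω | ε - ε' < |Y ω - Z ω|} := by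
  intro ω (hω : ε < |Z ω|)
  by_contra! h
  simp only [Set.mem_union, Set.mem_ofPred_eq, not_or, not_lt] at h
  linarith [abs_sub_abs_le_abs_sub (Z ω) (Y ω), abs_sub_comm (Z ω) (Y ω)]

lemma measure_abs_gt_le_of_tendsto {Ω ι : Type*} [MeasurableSpace Ω] {P : Measure Ω}
    {l : Filter ι} [l.NeBot] {Z : Ω → ℝ} {Zs : ι → Ω → ℝ} {ε' ε : ℝ}
    (hprob : Tendsto (fun m => P {ω | ε - ε' < |Zs m ω - Z ω|}) l (𝓝 0))
    {b : ι → ENNReal} {B : ENNReal} (hb : Tendsto b l (𝓝 B))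
    (hbound : ∀ m, P {ω | ε' < |Zs m ω|} ≤ b m) :
    P {ω | ε < |Z ω|} ≤ B := by
  refine ge_of_tendsto (by simpa using hb.add hprob) (Eventually.of_forall fun m => ?_)
  calc P {ω | ε < |Z ω|}
      ≤ P {ω | ε' < |Zs m ω|} + P {ω | ε - ε' < |Zs m ω - Z ω|} :=
        (measure_mono (setOf_lt_abs_subset_union Z (Zs m) ε' ε)).trans (measure_union_le _ _)
    _ ≤ b m + P {ω | ε - ε' < |Zs m ω - Z ω|} := by gcongr; exact hbound m

theorem statement7_general
    {Ω : Type*} [MeasurableSpace Ω] (P : Measure Ω) [IsProbabilityMeasure P]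
    (C χ : ℝ) (hC : 0 < C) (hχ : χ ∈ Set.Ioc (0 : ℝ) 2)
    (Z : Ω → ℝ) (Zs : ℕ → Ω → ℝ) (hZs : ∀ m, Measurable (Zs m))
    (hprob : ∀ ε > (0 : ℝ), Tendsto (fun m => P {ω | ε < |Zs m ω - Z ω|}) atTop (𝓝 0))
    (Ks : ℕ → ℝ) (hKs : ∀ m, 0 ≤ Ks m)
    (hchar : ∀ m t, charFn P (Zs m) t = (Real.exp (-(C * Ks m * |t| ^ χ)) : ℂ))
    (K : ℝ) (hKlim : Tendsto Ks atTop (𝓝 K)) :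
    ∀ ε' ε : ℝ, 0 < ε' → ε' < ε →
      P {ω | ε < |Z ω|} ≤ ENNReal.ofReal (2 ^ (χ + 1) * C * K / ((χ + 1) * ε' ^ χ)) := by
  intro ε' ε hε' hεε
  refine measure_abs_gt_le_of_tendsto (hprob _ (sub_pos.2 hεε))
    (ENNReal.tendsto_ofReal ((hKlim.const_mul _).div_const _)) fun m => ?_
  simpa only [mul_assoc] using measure_abs_gt_le_of_charFn_eq_exp (hZs m)
    (mul_nonneg hC.le (hKs m)) hχ.1.le hε' (hchar m)

/-- Paper's Lemma 3.3 (probabilistic content): if `Z_m → Z` in probability, each `Z_m` has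
characteristic function `exp(-C K_m |t|^χ)` and `K_m → K`, then for `0 < ε' < ε`,
`P(|Z| > ε) ≤ 2^{χ+1} C K / ((χ+1) (ε')^χ)`. -/
theorem statement7
    {Ω : Type*} [MeasurableSpace Ω] (P : Measure Ω) [IsProbabilityMeasure P]
    (C χ : ℝ) (hC : 0 < C) (hχ : χ ∈ Set.Ioc (0 : ℝ) 2)
    (Z : Ω → ℝ) (hZ : Measurable Z) (Zs : ℕ → Ω → ℝ) (hZs : ∀ m, Measurable (Zs m))
    (hprob : ∀ ε > (0 : ℝ), Tendsto (fun m => P {ω | ε < |Zs m ω - Z ω|}) atTop (𝓝 0))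
    (Ks : ℕ → ℝ) (hKs : ∀ m, 0 ≤ Ks m)
    (hchar : ∀ m t, charFn P (Zs m) t = (Real.exp (-(C * Ks m * |t| ^ χ)) : ℂ))
    (K : ℝ) (hKlim : Tendsto Ks atTop (𝓝 K)) :
    ∀ ε' ε : ℝ, 0 < ε' → ε' < ε →
      P {ω | ε < |Z ω|} ≤ ENNReal.ofReal (2 ^ (χ + 1) * C * K / ((χ + 1) * ε' ^ χ)) :=
  statement7_general P C χ hC hχ Z Zs hZs hprob Ks hKs hchar K hKlim
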